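/- arXiv:2206.03342 — 2 statements merged into one kernel-verified Lean document; each statement's English description precedes it below -/
import Mathlib

section
/- Let 𝒜 be a finite group of automorphisms of C (under composition of vector-permutation operators) and dec : ℝ^N → C any function. Then every decoder-equivalence class has cardinality |[𝟙]|, and the number of decoder-equivalence classes equals |𝒜| / |[𝟙]|. -/
/-- Action of a permutation on a vector: `(π(y))_i = y_{π(i)}`.  With this convention the
vector-permutation operators compose by `vp π ∘ vp σ = vp (σ * π)`, i.e. the operator
composition `π ∘ σ` of the paper corresponds to the permutation `σ * π`. -/
def vp {N : ℕ} {α : Type*} (π : Equiv.Perm (Fin N)) (y : Fin N → α) : Fin N → α :=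
  fun i => y (π i)

/-- Automorphism decoder: `adec(y;π) = π⁻¹(dec(π(y)))`. -/
def adec {N : ℕ} (dec : (Fin N → ℝ) → (Fin N → ZMod 2)) (π : Equiv.Perm (Fin N))
    (y : Fin N → ℝ) : Fin N → ZMod 2 :=
  vp π⁻¹ (dec (vp π y))

/-- `π` is an automorphism of the code `C`: `(x_{π(0)},…,x_{π(N−1)}) ∈ C` for all `x ∈ C`. -/
def IsCodeAut {N : ℕ} (C : Set (Fin N → ZMod 2)) (π : Equiv.Perm (Fin N)) : Prop :=
  ∀ x ∈ C, vp π x ∈ C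

lemma vp_vp {N : ℕ} {α : Type*} (π σ : Equiv.Perm (Fin N)) (y : Fin N → α) :
    vp π (vp σ y) = vp (σ * π) y := rfl

lemma vp_one {N : ℕ} {α : Type*} (y : Fin N → α) : vp (1 : Equiv.Perm (Fin N)) y = y := rfl

lemma adec_one {N : ℕ} (dec : (Fin N → ℝ) → (Fin N → ZMod 2)) (y : Fin N → ℝ) :
    adec dec 1 y = dec y := rfl

lemma adec_shift {N : ℕ} (dec : (Fin N → ℝ) → (Fin N → ZMod 2)) (π σ : Equiv.Perm (Fin N))
    (y : Fin N → ℝ) : adec dec (π⁻¹ * σ) (vp π y) = vp π (adec dec σ y) := by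
  simp only [adec, mul_inv_rev, inv_inv, vp_vp, mul_inv_cancel_left]

/-- Key equivalence: `σ ∼ π` iff `π⁻¹σ ∼ 𝟙`. -/
lemma key_iff {N : ℕ} (dec : (Fin N → ℝ) → (Fin N → ZMod 2)) (π σ : Equiv.Perm (Fin N)) :
    (∀ y, adec dec (π⁻¹ * σ) y = adec dec 1 y) ↔ (∀ y, adec dec σ y = adec dec π y) := by
  constructor
  · intro h y
    have h1 := h (vp π y)
    rw [adec_shift, adec_one] at h1
    have : vp π⁻¹ (vp π (adec dec σ y)) = vp π⁻¹ (dec (vp π y)) := by rw [h1]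
    rw [vp_vp, mul_inv_cancel, vp_one] at this
    rw [this]; rfl
  · intro h z
    have hz : vp π (vp π⁻¹ z) = z := by rw [vp_vp, inv_mul_cancel, vp_one]
    calc adec dec (π⁻¹ * σ) z = adec dec (π⁻¹ * σ) (vp π (vp π⁻¹ z)) := by rw [hz]
      _ = vp π (adec dec σ (vp π⁻¹ z)) := adec_shift ..
      _ = vp π (adec dec π (vp π⁻¹ z)) := by rw [h]
      _ = vp π (vp π⁻¹ (dec (vp π (vp π⁻¹ z)))) := rfl
      _ = dec z := by rw [hz, vp_vp, inv_mul_cancel, vp_one]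
      _ = adec dec 1 z := rfl

/-- Every decoder-equivalence class of `𝒜` has cardinality `|[𝟙]|` (where `[𝟙]` is the
class of the identity), and the number of classes equals `|𝒜| / |[𝟙]|`. -/
theorem card_equiv_classes (N : ℕ) (C : Set (Fin N → ZMod 2))
    (𝒜 : Subgroup (Equiv.Perm (Fin N))) (h𝒜 : ∀ π ∈ 𝒜, IsCodeAut C π)
    (dec : (Fin N → ℝ) → (Fin N → ZMod 2)) (hdec : ∀ y, dec y ∈ C) :
    (∀ π ∈ 𝒜,
      Nat.card {σ : Equiv.Perm (Fin N) | σ ∈ 𝒜 ∧ ∀ y, adec dec σ y = adec dec π y} =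
        Nat.card {σ : Equiv.Perm (Fin N) | σ ∈ 𝒜 ∧ ∀ y, adec dec σ y = adec dec 1 y}) ∧
    Nat.card {B : Set (Equiv.Perm (Fin N)) |
        ∃ π ∈ 𝒜, B = {σ | σ ∈ 𝒜 ∧ ∀ y, adec dec σ y = adec dec π y}} =
      Nat.card 𝒜 /
        Nat.card {σ : Equiv.Perm (Fin N) | σ ∈ 𝒜 ∧ ∀ y, adec dec σ y = adec dec 1 y} := by
  classical
  set S : Equiv.Perm (Fin N) → Set (Equiv.Perm (Fin N)) :=
    fun π => {σ : Equiv.Perm (Fin N) | σ ∈ 𝒜 ∧ ∀ y, adec dec σ y = adec dec π y} with hS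
  -- membership characterization
  have hmem : ∀ π ∈ 𝒜, ∀ σ, σ ∈ S π ↔ (π⁻¹ * σ) ∈ S 1 := by
    intro π hπ σ
    constructor
    · rintro ⟨h1, h2⟩
      exact ⟨𝒜.mul_mem (𝒜.inv_mem hπ) h1, (key_iff dec π σ).mpr h2⟩
    · rintro ⟨h1, h2⟩
      have : σ ∈ 𝒜 := by
        have := 𝒜.mul_mem hπ h1
        rwa [mul_inv_cancel_left] at this
      exact ⟨this, (key_iff dec π σ).mp h2⟩
  -- part 1
  have part1 : ∀ π ∈ 𝒜, Nat.card (S π) = Nat.card (S 1) := by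
    intro π hπ
    exact Nat.card_congr (Equiv.subtypeEquiv (Equiv.mulLeft π⁻¹) (fun σ => hmem π hπ σ))
  refine ⟨part1, ?_⟩
  -- S σ = S π iff σ ∼ π
  have hSeq : ∀ σ π, (∀ y, adec dec σ y = adec dec π y) → S σ = S π := by
    intro σ π h
    ext τ
    simp only [hS, Set.mem_setOf_eq]
    exact and_congr_right fun _ => forall_congr' fun y => by rw [h y]
  have hself : ∀ π ∈ 𝒜, π ∈ S π := fun π hπ => ⟨hπ, fun _ => rfl⟩
  set Q : Set (Set (Equiv.Perm (Fin N))) := {B | ∃ π ∈ 𝒜, B = S π} with hQ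
  set k := Nat.card (S 1) with hk
  have hkpos : 0 < k := by
    rw [hk]
    have : (1 : Equiv.Perm (Fin N)) ∈ S 1 := hself 1 𝒜.one_mem
    haveI : Nonempty (S 1) := ⟨⟨1, this⟩⟩
    exact Nat.card_pos
  -- fiber map
  letI : Fintype ↥𝒜 := Fintype.ofFinite _
  letI : Fintype ↥Q := Fintype.ofFinite _
  let f : ↥𝒜 → ↥Q := fun a => ⟨S a.1, a.1, a.2, rfl⟩
  have hfiber : ∀ b : ↥Q, Nat.card {a : ↥𝒜 // f a = b} = k := by
    rintro ⟨B, π₀, hπ₀, rfl⟩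
    have e : {a : ↥𝒜 // f a = ⟨S π₀, π₀, hπ₀, rfl⟩} ≃ ↥(S π₀) := by
      refine ⟨fun a => ⟨a.1.1, ?_⟩, fun σ => ⟨⟨σ.1, σ.2.1⟩, ?_⟩, fun a => by ext; rfl,
        fun σ => by ext; rfl⟩
      · have hS' : S a.1.1 = S π₀ := congrArg Subtype.val a.2
        have : (a.1 : Equiv.Perm (Fin N)) ∈ S a.1.1 := hself _ a.1.2
        rwa [hS'] at this
      · have : S σ.1 = S π₀ := hSeq _ _ σ.2.2
        exact Subtype.ext this
    rw [Nat.card_congr e]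
    exact part1 π₀ hπ₀
  have hcard : Nat.card ↥𝒜 = Nat.card ↥Q * k := by
    letI : ∀ b : ↥Q, Fintype {a : ↥𝒜 // f a = b} := fun b => Fintype.ofFinite _
    rw [Nat.card_eq_fintype_card, Nat.card_eq_fintype_card]
    calc Fintype.card ↥𝒜
        = Fintype.card (Σ b : ↥Q, {a : ↥𝒜 // f a = b}) :=
          Fintype.card_congr (Equiv.sigmaFiberEquiv f).symm
      _ = ∑ b : ↥Q, Fintype.card {a : ↥𝒜 // f a = b} := Fintype.card_sigma
      _ = ∑ _b : ↥Q, k := Finset.sum_congr rfl fun b _ => by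
          rw [← Nat.card_eq_fintype_card]; exact hfiber b
      _ = Fintype.card ↥Q * k := by rw [Finset.sum_const, Finset.card_univ, smul_eq_mul]
  rw [hcard, Nat.mul_div_cancel _ hkpos]
end

section
/- Let S = (s_1,…,s_l) be a composition of n and S_1 a refinement of S. For every M ∈ BLTL(S) there exist a block-diagonal matrix P = diag(P_1,…,P_l), with each P_i an s_i×s_i permutation matrix, and a block-diagonal matrix U = diag(U_1,…,U_l), with each U_i an invertible upper-triangular s_i×s_i matrix over 𝔽₂, such that M^{-1}·(P·U) ∈ BLTL(S_1); that is, every coset M·BLTL(S_1) of the subgroup BLTL(S_1) in BLTL(S) contains a matrix of the form P·U. -/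
/-- `r` and `c` lie in the same diagonal block of the profile `S = (s_1,…,s_l)`. -/
def sameBlock (S : List ℕ) (r c : ℕ) : Prop :=
  ∃ k, (S.take k).sum ≤ r ∧ r < (S.take (k + 1)).sum ∧
    (S.take k).sum ≤ c ∧ c < (S.take (k + 1)).sum

/-- `A` is block lower triangular of profile `S`: `A r c = 0` whenever `c > r` and
`r`, `c` do not lie in the same diagonal block. -/
def IsBLT (n : ℕ) (S : List ℕ) (A : Matrix (Fin n) (Fin n) (ZMod 2)) : Prop :=
  ∀ r c : Fin n, (r : ℕ) < (c : ℕ) → ¬ sameBlock S (r : ℕ) (c : ℕ) → A r c = 0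


def blockStart (S : List ℕ) (k : ℕ) : ℕ := (S.take k).sum

lemma blockIdx_lt {n : ℕ} {S : List ℕ} (hsum : S.sum = n) {k : ℕ} (hk : k < S.length)
    {a : ℕ} (ha : a < S[k]) : blockStart S k + a < n := by
  subst hsum
  have h1 : (S.take k).sum + (S.drop k).sum = S.sum := by
    rw [← List.sum_append, List.take_append_drop]
  have h2 : S.drop k = S[k] :: S.drop (k + 1) := List.drop_eq_getElem_cons hk
  have h3 : (S.drop k).sum = S[k] + (S.drop (k + 1)).sum := by rw [h2, List.sum_cons]
  unfold blockStart
  omega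

/-- The `k`-th diagonal block (an `s_k × s_k` matrix) of `M`, w.r.t. the profile `S`. -/
def blockMat (n : ℕ) (S : List ℕ) (hsum : S.sum = n) (M : Matrix (Fin n) (Fin n) (ZMod 2))
    (k : ℕ) (hk : k < S.length) : Matrix (Fin S[k]) (Fin S[k]) (ZMod 2) :=
  fun a b => M ⟨blockStart S k + a, blockIdx_lt hsum hk a.isLt⟩
               ⟨blockStart S k + b, blockIdx_lt hsum hk b.isLt⟩

/-- `M` is block diagonal with respect to the profile `S`. -/
def IsBlockDiag (n : ℕ) (S : List ℕ) (M : Matrix (Fin n) (Fin n) (ZMod 2)) : Prop :=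
  ∀ r c : Fin n, ¬ sameBlock S (r : ℕ) (c : ℕ) → M r c = 0


lemma take_sum_le (S : List ℕ) (j : ℕ) : (S.take j).sum ≤ S.sum := by
  conv_rhs => rw [← List.take_append_drop j S]
  rw [List.sum_append]; omega

lemma take_sum_mono (S : List ℕ) {j k : ℕ} (h : j ≤ k) :
    (S.take j).sum ≤ (S.take k).sum := by
  have : S.take j = (S.take k).take j := by rw [List.take_take, min_eq_left h]
  rw [this]; exact take_sum_le _ _

lemma block_disjoint {S : List ℕ} {x k k' : ℕ}
    (h1 : (S.take k).sum ≤ x) (h2 : x < (S.take (k+1)).sum)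
    (h3 : (S.take k').sum ≤ x) (h4 : x < (S.take (k'+1)).sum) : k = k' := by
  by_contra hne
  rcases Nat.lt_or_ge k k' with h | h
  · have := take_sum_mono S (show k + 1 ≤ k' from h); omega
  · have hk : k' < k := by omega
    have := take_sum_mono S (show k' + 1 ≤ k from hk); omega

lemma sameBlock_symm {S : List ℕ} {r c : ℕ} (h : sameBlock S r c) : sameBlock S c r := by
  obtain ⟨k, h1, h2, h3, h4⟩ := h; exact ⟨k, h3, h4, h1, h2⟩

lemma sameBlock_trans {S : List ℕ} {a x b : ℕ} (h : sameBlock S a x) (h' : sameBlock S x b) :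
    sameBlock S a b := by
  obtain ⟨k, h1, h2, h3, h4⟩ := h
  obtain ⟨k', h1', h2', h3', h4'⟩ := h'
  have := block_disjoint h3 h4 h1' h2'
  subst this
  exact ⟨k, h1, h2, h3', h4'⟩

lemma sameBlock_of_between {S : List ℕ} {a x b : ℕ} (h : sameBlock S a b)
    (h1 : a ≤ x) (h2 : x ≤ b) : sameBlock S a x := by
  obtain ⟨k, ha1, ha2, hb1, hb2⟩ := h
  exact ⟨k, ha1, ha2, by omega, by omega⟩

lemma mem_block {S : List ℕ} {x : ℕ} (h : x < S.sum) :
    ∃ k, (S.take k).sum ≤ x ∧ x < (S.take (k+1)).sum := by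
  induction S generalizing x with
  | nil => simp at h
  | cons s t ih =>
    rcases Nat.lt_or_ge x s with hx | hx
    · exact ⟨0, by simp, by simpa using hx⟩
    · have : x - s < t.sum := by simp [List.sum_cons] at h; omega
      obtain ⟨k, hk1, hk2⟩ := ih this
      exact ⟨k + 1, by simp [List.sum_cons]; omega, by simp [List.sum_cons]; omega⟩

lemma sameBlock_refl {S : List ℕ} {x : ℕ} (h : x < S.sum) : sameBlock S x x := by
  obtain ⟨k, h1, h2⟩ := mem_block h
  exact ⟨k, h1, h2, h1, h2⟩

lemma IsBLT_mul {n : ℕ} {S : List ℕ}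
    {A B : Matrix (Fin n) (Fin n) (ZMod 2)}
    (hA : IsBLT n S A) (hB : IsBLT n S B) : IsBLT n S (A * B) := by
  intro r c hrc hns
  rw [Matrix.mul_apply]
  apply Finset.sum_eq_zero
  intro j _
  rcases Nat.lt_or_ge (r : ℕ) (j : ℕ) with hj | hj
  · by_cases hsb : sameBlock S (r : ℕ) (j : ℕ)
    · rcases Nat.lt_or_ge (j : ℕ) (c : ℕ) with hjc | hjc
      · by_cases hsb2 : sameBlock S (j : ℕ) (c : ℕ)
        · exact absurd (sameBlock_trans hsb hsb2) hns
        · rw [hB j c hjc hsb2, mul_zero]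
      · exact absurd (sameBlock_of_between hsb (le_of_lt hrc) hjc) hns
    · rw [hA r j hj hsb, zero_mul]
  · -- j ≤ r < c
    by_cases hsb2 : sameBlock S (j : ℕ) (c : ℕ)
    · obtain ⟨k, h1, h2, h3, h4⟩ := hsb2
      exact absurd ⟨k, by omega, by omega, h3, h4⟩ hns
    · rw [hB j c (by omega) hsb2, mul_zero]

lemma IsBLT_of_blockDiag {n : ℕ} {S : List ℕ} {A : Matrix (Fin n) (Fin n) (ZMod 2)}
    (h : IsBlockDiag n S A) : IsBLT n S A := fun r c _ hns => h r c hns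

-- Pmat
def Pmat {n : ℕ} (σ : Equiv.Perm (Fin n)) : Matrix (Fin n) (Fin n) (ZMod 2) :=
  Matrix.of fun a b => if a = σ b then 1 else 0

lemma Pmat_mul_Pmat {n : ℕ} (σ τ : Equiv.Perm (Fin n)) :
    Pmat σ * Pmat τ = Pmat (σ * τ) := by
  ext a b
  rw [Matrix.mul_apply]
  simp only [Pmat, Matrix.of_apply, mul_ite, mul_one, mul_zero, ite_mul, one_mul, zero_mul]
  rw [Finset.sum_ite_eq' Finset.univ (τ b) (fun x => if a = σ x then (1 : ZMod 2) else 0)]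
  simp [Equiv.Perm.mul_apply]
  exact if_congr Iff.rfl rfl rfl

lemma Pmat_one {n : ℕ} : Pmat (1 : Equiv.Perm (Fin n)) = 1 := by
  ext a b
  simp [Pmat, Matrix.one_apply, eq_comm]
  exact if_congr Iff.rfl rfl rfl

lemma Pmat_isUnit {n : ℕ} (σ : Equiv.Perm (Fin n)) : IsUnit (Pmat σ) := by
  have h1 : Pmat σ * Pmat σ⁻¹ = 1 := by
    rw [Pmat_mul_Pmat]
    have : σ * σ⁻¹ = 1 := mul_inv_cancel σ
    rw [this, Pmat_one]
  have h2 : Pmat σ⁻¹ * Pmat σ = 1 := by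
    rw [Pmat_mul_Pmat]
    have : σ⁻¹ * σ = 1 := inv_mul_cancel σ
    rw [this, Pmat_one]
  exact ⟨⟨Pmat σ, Pmat σ⁻¹, h1, h2⟩, rfl⟩

lemma mul_Pmat_apply {n : ℕ} (A : Matrix (Fin n) (Fin n) (ZMod 2)) (τ : Equiv.Perm (Fin n))
    (a b : Fin n) : (A * Pmat τ) a b = A a (τ b) := by
  rw [Matrix.mul_apply]
  simp only [Pmat, Matrix.of_apply, mul_ite, mul_one, mul_zero]
  exact Finset.sum_ite_eq' Finset.univ (τ b) (fun x => A a x) |>.trans (by simp)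

-- unitriangular facts
def UniUpper (n : ℕ) (U : Matrix (Fin n) (Fin n) (ZMod 2)) : Prop :=
  (∀ i : Fin n, U i i = 1) ∧ (∀ i j : Fin n, (j : ℕ) < (i : ℕ) → U i j = 0)

lemma UniUpper_isUnit {n : ℕ} {U : Matrix (Fin n) (Fin n) (ZMod 2)} (h : UniUpper n U) :
    IsUnit U := by
  rw [Matrix.isUnit_iff_isUnit_det]
  rw [Matrix.det_of_upperTriangular (fun i j hij => h.2 i j hij)]
  simp [h.1]

lemma zmod2_ne_zero {x : ZMod 2} (h : x ≠ 0) : x = 1 := by revert h; revert x; decide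

lemma zmod2_add_self (x : ZMod 2) : x + x = 0 := by revert x; decide

-- inverse of BLT is BLT via Cayley-Hamilton
lemma IsBLT_one {n : ℕ} {S : List ℕ} (hsum : S.sum = n) : IsBLT n S (1 : Matrix (Fin n) (Fin n) (ZMod 2)) := by
  intro r c hrc _
  exact Matrix.one_apply_ne (fun h => by simp [h] at hrc)

lemma IsBLT_add {n : ℕ} {S : List ℕ} {A B : Matrix (Fin n) (Fin n) (ZMod 2)}
    (hA : IsBLT n S A) (hB : IsBLT n S B) : IsBLT n S (A + B) := by
  intro r c h1 h2
  simp [Matrix.add_apply, hA r c h1 h2, hB r c h1 h2]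

lemma IsBLT_smul {n : ℕ} {S : List ℕ} {A : Matrix (Fin n) (Fin n) (ZMod 2)} (z : ZMod 2)
    (hA : IsBLT n S A) : IsBLT n S (z • A) := by
  intro r c h1 h2
  simp [Matrix.smul_apply, hA r c h1 h2]

lemma IsBLT_pow {n : ℕ} {S : List ℕ} (hsum : S.sum = n) {A : Matrix (Fin n) (Fin n) (ZMod 2)}
    (hA : IsBLT n S A) : ∀ k : ℕ, IsBLT n S (A ^ k)
  | 0 => by rw [pow_zero]; exact IsBLT_one hsum
  | (k+1) => by rw [pow_succ]; exact IsBLT_mul (IsBLT_pow hsum hA k) hA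

lemma IsBLT_aeval {n : ℕ} {S : List ℕ} (hsum : S.sum = n) {A : Matrix (Fin n) (Fin n) (ZMod 2)}
    (hA : IsBLT n S A) (p : Polynomial (ZMod 2)) : IsBLT n S (Polynomial.aeval A p) := by
  induction p using Polynomial.induction_on' with
  | add p q hp hq => rw [map_add]; exact IsBLT_add hp hq
  | monomial k a =>
    rw [Polynomial.aeval_monomial]
    have h1 : IsBLT n S (A ^ k) := IsBLT_pow hsum hA k
    have h2 : (algebraMap (ZMod 2) (Matrix (Fin n) (Fin n) (ZMod 2))) a = a • 1 :=
      Algebra.algebraMap_eq_smul_one a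
    rw [h2, smul_mul_assoc, one_mul]
    exact IsBLT_smul a h1

lemma IsBLT_inv {n : ℕ} {S : List ℕ} (hsum : S.sum = n) {M : Matrix (Fin n) (Fin n) (ZMod 2)}
    (hM : IsBLT n S M) (hMu : IsUnit M) : IsBLT n S M⁻¹ := by
  have hdet : IsUnit M.det := (Matrix.isUnit_iff_isUnit_det M).mp hMu
  have hdet1 : M.det = 1 := zmod2_ne_zero (fun h0 => by simp [h0] at hdet)
  have hc : M.charpoly.coeff 0 = 1 := by
    have := Matrix.det_eq_sign_charpoly_coeff M
    have hneg : ((-1 : ZMod 2) ^ Fintype.card (Fin n)) = 1 := by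
      have : (-1 : ZMod 2) = 1 := by decide
      rw [this, one_pow]
    rw [hdet1, hneg, one_mul] at this
    exact this.symm
  have hch := Matrix.aeval_self_charpoly M
  have hdecomp := Polynomial.X_mul_divX_add M.charpoly
  have : Polynomial.aeval M (Polynomial.X * M.charpoly.divX + Polynomial.C (M.charpoly.coeff 0)) = 0 := by
    rw [hdecomp]; exact hch
  rw [map_add, map_mul, Polynomial.aeval_X, Polynomial.aeval_C, hc, map_one] at this
  have hmul : M * Polynomial.aeval M M.charpoly.divX = 1 := by
    have key : ∀ x y : ZMod 2, x + y = 0 → x = y := by decide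
    ext i j
    have h3 := congrFun (congrFun this i) j
    simp only [Matrix.add_apply, Matrix.zero_apply] at h3
    exact key _ _ h3
  have hinv := Matrix.inv_eq_right_inv hmul
  rw [hinv]
  exact IsBLT_aeval hsum hM _

lemma card_filter_lt {n : ℕ} {r : ℕ} (h : r ≤ n) :
    (Finset.univ.filter (fun j : Fin n => (j : ℕ) < r)).card = r := by
  have : Finset.univ.filter (fun j : Fin n => (j : ℕ) < r)
      = Finset.univ.map (Fin.castLEEmb h) := by
    ext j
    simp only [Finset.mem_filter, Finset.mem_univ, true_and, Finset.mem_map,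
      Fin.castLEEmb, Function.Embedding.coeFn_mk]
    constructor
    · intro hj
      exact ⟨⟨(j : ℕ), hj⟩, rfl⟩
    · rintro ⟨a, rfl⟩
      exact a.isLt
  rw [this, Finset.card_map, Finset.card_univ, Fintype.card_fin]

lemma exists_pivot {n : ℕ} {B : Matrix (Fin n) (Fin n) (ZMod 2)} (hBu : IsUnit B)
    {r : ℕ} (hr : r < n)
    (hrows : ∀ i j : Fin n, (i : ℕ) < r → (i : ℕ) < (j : ℕ) → B i j = 0) :
    ∃ c : Fin n, r ≤ (c : ℕ) ∧ B ⟨r, hr⟩ c ≠ 0 := by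
  by_contra hcon
  push_neg at hcon
  have hdet : B.det = 0 := by
    rw [Matrix.det_apply]
    apply Finset.sum_eq_zero
    intro σ _
    by_cases hall : ∀ i : Fin n, B (σ i) i ≠ 0
    · exfalso
      have hmap : ∀ j : Fin n, (j : ℕ) ≤ r → ((σ.symm j : Fin n) : ℕ) < r := by
        intro j hj
        have hnz : B j (σ.symm j) ≠ 0 := by
          have := hall (σ.symm j)
          rwa [Equiv.apply_symm_apply] at this
        by_contra hge
        push_neg at hge
        rcases Nat.lt_or_ge (j : ℕ) r with hjr | hjr
        · exact hnz (hrows j _ hjr (lt_of_lt_of_le hjr hge))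
        · have hjeq : j = ⟨r, hr⟩ := Fin.ext (le_antisymm hj hjr)
          subst hjeq
          exact hnz (hcon _ hge)
      have hsub : ∀ a ∈ Finset.univ.filter (fun j : Fin n => (j : ℕ) ≤ r),
          σ.symm a ∈ Finset.univ.filter (fun j : Fin n => (j : ℕ) < r) := by
        intro a ha
        simp only [Finset.mem_filter, Finset.mem_univ, true_and] at ha ⊢
        exact hmap a ha
      have hinj : Set.InjOn (fun j => σ.symm j)
          ↑(Finset.univ.filter (fun j : Fin n => (j : ℕ) ≤ r)) :=
        fun a _ b _ hab => σ.symm.injective hab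
      have hcard := Finset.card_le_card_of_injOn _ hsub hinj
      have h1 : Finset.univ.filter (fun j : Fin n => (j : ℕ) ≤ r)
          = Finset.univ.filter (fun j : Fin n => (j : ℕ) < r + 1) := by
        ext j; simp [Nat.lt_succ_iff]
      rw [h1, card_filter_lt hr, card_filter_lt (le_of_lt hr)] at hcard
      omega
    · push_neg at hall
      obtain ⟨i, hi⟩ := hall
      have hz : (∏ i : Fin n, B (σ i) i) = 0 := Finset.prod_eq_zero (Finset.mem_univ i) hi
      rw [hz, smul_zero]
  have := (Matrix.isUnit_iff_isUnit_det B).mp hBu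
  rw [hdet] at this
  simp at this

lemma IsBlockDiag_mul {n : ℕ} {S : List ℕ} {A B : Matrix (Fin n) (Fin n) (ZMod 2)}
    (hA : IsBlockDiag n S A) (hB : IsBlockDiag n S B) : IsBlockDiag n S (A * B) := by
  intro r c hns
  rw [Matrix.mul_apply]
  apply Finset.sum_eq_zero
  intro j _
  by_cases h1 : sameBlock S (r : ℕ) (j : ℕ)
  · by_cases h2 : sameBlock S (j : ℕ) (c : ℕ)
    · exact absurd (sameBlock_trans h1 h2) hns
    · rw [hB j c h2, mul_zero]
  · rw [hA r j h1, zero_mul]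

lemma Pmat_blockDiag {n : ℕ} {S : List ℕ} {σ : Equiv.Perm (Fin n)}
    (hσ : ∀ i : Fin n, sameBlock S ((σ i : Fin n) : ℕ) (i : ℕ)) :
    IsBlockDiag n S (Pmat σ) := by
  intro r c hns
  simp only [Pmat, Matrix.of_apply]
  split
  · next h => exact absurd (h ▸ hσ c) hns
  · rfl

lemma Pmat_mul_apply {n : ℕ} (τ : Equiv.Perm (Fin n)) (A : Matrix (Fin n) (Fin n) (ZMod 2))
    (a b : Fin n) : (Pmat τ * A) a b = A (τ⁻¹ a) b := by
  rw [Matrix.mul_apply]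
  simp only [Pmat, Matrix.of_apply, ite_mul, one_mul, zero_mul]
  have : ∀ x : Fin n, (if a = τ x then A x b else 0) = if x = τ⁻¹ a then A x b else 0 := by
    intro x
    congr 1
    simp only [eq_iff_iff]
    constructor
    · intro h; rw [h]; simp
    · intro h; rw [h]; simp
  rw [Finset.sum_congr rfl (fun x _ => this x),
    Finset.sum_ite_eq' Finset.univ (τ⁻¹ a) (fun x => A x b)]
  simp

lemma key_induction {n : ℕ} {S : List ℕ} (hsum : S.sum = n)
    {N : Matrix (Fin n) (Fin n) (ZMod 2)} (hN : IsBLT n S N) (hNu : IsUnit N) :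
    ∀ r : ℕ, r ≤ n →
    ∃ (σ : Equiv.Perm (Fin n)) (U : Matrix (Fin n) (Fin n) (ZMod 2)),
      (∀ i : Fin n, sameBlock S ((σ i : Fin n) : ℕ) (i : ℕ)) ∧
      IsBlockDiag n S U ∧
      (∀ i : Fin n, U i i = 1) ∧
      (∀ i j : Fin n, (j : ℕ) < (i : ℕ) → U i j = 0) ∧
      (∀ i j : Fin n, r ≤ (i : ℕ) → U i j = if i = j then 1 else 0) ∧
      (∀ i j : Fin n, (i : ℕ) < r → (i : ℕ) < (j : ℕ) → (N * (Pmat σ * U)) i j = 0) := by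
  intro r
  induction r with
  | zero =>
    intro _
    refine ⟨1, 1, ?_, ?_, ?_, ?_, ?_, ?_⟩
    · intro i
      simp only [Equiv.Perm.one_apply]
      exact sameBlock_refl (hsum ▸ i.isLt)
    · intro i j hns
      apply Matrix.one_apply_ne
      rintro rfl
      exact hns (sameBlock_refl (hsum ▸ i.isLt))
    · intro i; simp
    · intro i j hji
      exact Matrix.one_apply_ne (fun h => by subst h; omega)
    · intro i j _; exact Matrix.one_apply
    · intro i j h; omega
  | succ r ih =>
    intro hr1
    have hrn : r < n := hr1
    obtain ⟨σ, U, hσ, hUbd, hUdiag, hUlow, hUid, hrows⟩ := ih (le_of_lt hrn)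
    set B := N * (Pmat σ * U) with hBdef
    have hPσbd := Pmat_blockDiag hσ
    have hBblt : IsBLT n S B :=
      IsBLT_mul hN (IsBLT_mul (IsBLT_of_blockDiag hPσbd) (IsBLT_of_blockDiag hUbd))
    have hBu : IsUnit B :=
      hNu.mul ((Pmat_isUnit σ).mul (UniUpper_isUnit ⟨hUdiag, hUlow⟩))
    obtain ⟨c, hc1, hc2⟩ := exists_pivot hBu hrn hrows
    set rr : Fin n := ⟨r, hrn⟩ with hrrdef
    have hsbrc : sameBlock S (rr : ℕ) (c : ℕ) := by
      rcases eq_or_ne rr c with rfl | hne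
      · exact sameBlock_refl (hsum ▸ rr.isLt)
      · have hlt : (rr : ℕ) < (c : ℕ) := by
          have : (rr : ℕ) ≠ (c : ℕ) := fun h => hne (Fin.ext h)
          simp only [hrrdef] at *
          omega
        by_contra hns
        exact hc2 (hBblt rr c hlt hns)
    set τ := Equiv.swap rr c with hτdef
    have hτrr : τ rr = c := Equiv.swap_apply_left rr c
    have hτc : τ c = rr := Equiv.swap_apply_right rr c
    have hτother : ∀ i : Fin n, i ≠ rr → i ≠ c → τ i = i :=
      fun i h1 h2 => Equiv.swap_apply_of_ne_of_ne h1 h2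
    have hτval : ∀ i : Fin n, r ≤ (i : ℕ) → r ≤ ((τ i : Fin n) : ℕ) := by
      intro i hi
      rcases eq_or_ne i rr with rfl | h1
      · rw [hτrr]; exact hc1
      · rcases eq_or_ne i c with rfl | h2
        · rw [hτc]
        · rw [hτother i h1 h2]; exact hi
    have hτlow : ∀ i : Fin n, (i : ℕ) < r → τ i = i := by
      intro i hi
      refine hτother i (fun h => ?_) (fun h => ?_)
      · subst h; simp [hrrdef] at hi
      · subst h; omega
    have hτsb : ∀ i : Fin n, sameBlock S ((τ i : Fin n) : ℕ) (i : ℕ) := by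
      intro i
      rcases eq_or_ne i rr with rfl | h1
      · rw [hτrr]; exact sameBlock_symm hsbrc
      · rcases eq_or_ne i c with rfl | h2
        · rw [hτc]; exact hsbrc
        · rw [hτother i h1 h2]; exact sameBlock_refl (hsum ▸ i.isLt)
    set B' := B * Pmat τ with hB'def
    have hB'app : ∀ a b, B' a b = B a (τ b) := fun a b => mul_Pmat_apply B τ a b
    have hB'blt : IsBLT n S B' := IsBLT_mul hBblt (IsBLT_of_blockDiag (Pmat_blockDiag hτsb))
    have hpivot : B' rr rr = 1 := by
      rw [hB'app, hτrr]; exact zmod2_ne_zero hc2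
    set w : Fin n → ZMod 2 := fun j => if r < (j : ℕ) then B' rr j else 0 with hwdef
    have hwsb : ∀ j : Fin n, w j ≠ 0 → r < (j : ℕ) ∧ sameBlock S (rr : ℕ) (j : ℕ) := by
      intro j hw
      simp only [hwdef] at hw
      split at hw
      · next h =>
        refine ⟨h, ?_⟩
        by_contra hns
        exact hw (hB'blt rr j h hns)
      · exact absurd rfl hw
    have hwrr : w rr = 0 := by simp [hwdef, hrrdef]
    set E : Matrix (Fin n) (Fin n) (ZMod 2) :=
      1 + Matrix.of (fun a b => if a = rr then w b else 0) with hEdef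
    have hmulE : ∀ (A : Matrix (Fin n) (Fin n) (ZMod 2)) (a b : Fin n),
        (A * E) a b = A a b + A a rr * w b := by
      intro A a b
      rw [hEdef, Matrix.mul_add, Matrix.mul_one, Matrix.add_apply]
      congr 1
      rw [Matrix.mul_apply]
      have : ∀ x : Fin n, A a x * (Matrix.of (fun a b => if a = rr then w b else 0)) x b
          = if x = rr then A a x * w b else 0 := by
        intro x
        simp only [Matrix.of_apply]
        split <;> simp
      rw [Finset.sum_congr rfl (fun x _ => this x)]
      rw [Finset.sum_ite_eq' Finset.univ rr (fun x => A a x * w b)]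
      simp
    -- U₁ := Pmat τ * U * Pmat τ
    set U₁ := Pmat τ * U * Pmat τ with hU₁def
    have hτinv : τ⁻¹ = τ := Equiv.symm_swap rr c
    have hU₁app : ∀ a b, U₁ a b = U (τ a) (τ b) := by
      intro a b
      rw [hU₁def, mul_Pmat_apply, Pmat_mul_apply, hτinv]
    have hU₁id : ∀ a b : Fin n, r ≤ (a : ℕ) → U₁ a b = if a = b then 1 else 0 := by
      intro a b ha
      rw [hU₁app, hUid (τ a) (τ b) (hτval a ha)]
      congr 1
      simp [eq_iff_iff, τ.injective.eq_iff]
    have hU₁diag : ∀ a : Fin n, U₁ a a = 1 := by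
      intro a; rw [hU₁app]; exact hUdiag (τ a)
    have hU₁low : ∀ a b : Fin n, (b : ℕ) < (a : ℕ) → U₁ a b = 0 := by
      intro a b hba
      rcases Nat.lt_or_ge (a : ℕ) r with ha | ha
      · rw [hU₁app, hτlow a ha, hτlow b (by omega)]
        exact hUlow a b hba
      · rw [hU₁id a b ha]
        exact if_neg (fun h => by subst h; omega)
    have hU₁bd : IsBlockDiag n S U₁ := by
      intro a b hns
      rw [hU₁app]
      by_contra hne
      have h1 : sameBlock S ((τ a : Fin n) : ℕ) ((τ b : Fin n) : ℕ) := by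
        by_contra hns2
        exact hne (hUbd (τ a) (τ b) hns2)
      exact hns (sameBlock_trans (sameBlock_trans (sameBlock_symm (hτsb a)) h1) (hτsb b))
    -- U' := U₁ * E
    set U' := U₁ * E with hU'def
    have hU'app : ∀ a b, U' a b = U₁ a b + U₁ a rr * w b := fun a b => hmulE U₁ a b
    have hU₁arr0 : ∀ a : Fin n, r < (a : ℕ) → U₁ a rr = 0 := by
      intro a ha
      rw [hU₁id a rr (le_of_lt ha)]
      exact if_neg (fun h => by subst h; simp [hrrdef] at ha)
    have hU'diag : ∀ a : Fin n, U' a a = 1 := by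
      intro a
      rw [hU'app, hU₁diag]
      rcases eq_or_ne (w a) 0 with hw | hw
      · rw [hw, mul_zero, add_zero]
      · obtain ⟨h1, _⟩ := hwsb a hw
        rw [hU₁arr0 a h1, zero_mul, add_zero]
    have hU'low : ∀ a b : Fin n, (b : ℕ) < (a : ℕ) → U' a b = 0 := by
      intro a b hba
      rw [hU'app, hU₁low a b hba]
      rcases eq_or_ne (w b) 0 with hw | hw
      · rw [hw, mul_zero, add_zero]
      · obtain ⟨h1, _⟩ := hwsb b hw
        rw [hU₁arr0 a (by omega), zero_mul, add_zero]
    have hU'id : ∀ a b : Fin n, r + 1 ≤ (a : ℕ) → U' a b = if a = b then 1 else 0 := by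
      intro a b ha
      rw [hU'app, hU₁id a b (by omega), hU₁arr0 a (by omega), zero_mul, add_zero]
    have hU'bd : IsBlockDiag n S U' := by
      intro a b hns
      rw [hU'app, hU₁bd a b hns]
      rcases eq_or_ne (w b) 0 with hw | hw
      · rw [hw, mul_zero, add_zero]
      · obtain ⟨_, h2⟩ := hwsb b hw
        rcases eq_or_ne (U₁ a rr) 0 with hu | hu
        · rw [hu, zero_mul, add_zero]
        · exfalso
          have h3 : sameBlock S (a : ℕ) (rr : ℕ) := by
            by_contra hns2
            exact hu (hU₁bd a rr hns2)
          exact hns (sameBlock_trans h3 h2)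
    -- product equation
    have hττ : Pmat τ * Pmat τ = 1 := by
      rw [Pmat_mul_Pmat]
      have : τ * τ = 1 := Equiv.swap_mul_self rr c
      rw [this, Pmat_one]
    have hprod : N * (Pmat (σ * τ) * U') = B' * E := by
      rw [← Pmat_mul_Pmat, hU'def, hU₁def, hB'def, hBdef]
      simp only [mul_assoc]
      rw [show Pmat τ * (Pmat τ * (U * (Pmat τ * E))) = U * (Pmat τ * E) by
        rw [← mul_assoc, hττ, one_mul]]
    have hrows' : ∀ i j : Fin n, (i : ℕ) < r + 1 → (i : ℕ) < (j : ℕ) →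
        (N * (Pmat (σ * τ) * U')) i j = 0 := by
      intro i j hi hij
      rw [hprod, hmulE B' i j]
      rcases Nat.lt_or_ge (i : ℕ) r with hir | hir
      · have h1 : B' i j = 0 := by
          rw [hB'app]
          apply hrows i (τ j) hir
          rcases eq_or_ne j rr with rfl | hj1
          · rw [hτrr]; exact lt_of_lt_of_le hir hc1
          · rcases eq_or_ne j c with rfl | hj2
            · rw [hτc]; exact hir
            · rw [hτother j hj1 hj2]; exact hij
        have h2 : B' i rr = 0 := by
          rw [hB'app, hτrr]
          exact hrows i c hir (lt_of_lt_of_le hir hc1)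
        rw [h1, h2, zero_mul, add_zero]
      · have hieq : i = rr := by
          apply Fin.ext
          show (i : ℕ) = r
          omega
        subst hieq
        have hjr : r < (j : ℕ) := hij
        have hw : w j = B' rr j := by simp [hwdef, hjr]
        rw [hpivot, one_mul, hw]
        exact zmod2_add_self _
    refine ⟨σ * τ, U', ?_, hU'bd, hU'diag, hU'low, hU'id, hrows'⟩
    intro i
    have : (σ * τ) i = σ (τ i) := rfl
    rw [this]
    exact sameBlock_trans (hσ (τ i)) (hτsb i)

/-- Let `S₁ = P.flatten` refine the composition `S` of `n`.  Every coset `M·BLTL(S₁)` of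
`BLTL(S₁)` in `BLTL(S)` contains a matrix `Pm·U`, where `Pm = diag(P_1,…,P_l)` is block
diagonal with permutation-matrix blocks and `U = diag(U_1,…,U_l)` is block diagonal with
invertible upper-triangular blocks: `M⁻¹·(Pm·U) ∈ BLTL(S₁)`. -/
theorem coset_contains_PU (n : ℕ) (S : List ℕ) (hpos : ∀ s ∈ S, 0 < s)
    (hsum : S.sum = n) (P : List (List ℕ)) (hP : P.map List.sum = S)
    (hPpos : ∀ l ∈ P, ∀ x ∈ l, 0 < x) (S₁ : List ℕ) (hS₁ : S₁ = P.flatten)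
    (M : Matrix (Fin n) (Fin n) (ZMod 2)) (hMblt : IsBLT n S M) (hMunit : IsUnit M) :
    ∃ Pm U : Matrix (Fin n) (Fin n) (ZMod 2),
      IsBlockDiag n S Pm ∧ IsBlockDiag n S U ∧
      (∀ (k : ℕ) (hk : k < S.length),
        ∃ σ : Equiv.Perm (Fin S[k]),
          ∀ a b : Fin S[k],
            blockMat n S hsum Pm k hk a b = if a = σ b then 1 else 0) ∧
      (∀ (k : ℕ) (hk : k < S.length),
        IsUnit (blockMat n S hsum U k hk) ∧
          ∀ a b : Fin S[k], (b : ℕ) < (a : ℕ) → blockMat n S hsum U k hk a b = 0) ∧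
      IsBLT n S₁ (M⁻¹ * (Pm * U)) ∧ IsUnit (M⁻¹ * (Pm * U)) := by
  have hNblt : IsBLT n S M⁻¹ := IsBLT_inv hsum hMblt hMunit
  have hNu : IsUnit M⁻¹ := by
    rw [Matrix.isUnit_iff_isUnit_det, Matrix.det_nonsing_inv]
    have : IsUnit M.det := (Matrix.isUnit_iff_isUnit_det M).mp hMunit
    have h1 : M.det = 1 := zmod2_ne_zero (fun h0 => by simp [h0] at this)
    rw [h1]
    simp
  obtain ⟨σ, U, hσ, hUbd, hUdiag, hUlow, _, hrows⟩ :=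
    key_induction hsum hNblt hNu n (le_refl n)
  refine ⟨Pmat σ, U, Pmat_blockDiag hσ, hUbd, ?_, ?_, ?_, ?_⟩
  · -- permutation blocks
    intro k hk
    have hend : (S.take (k+1)).sum = blockStart S k + S[k] := List.sum_take_succ S k hk
    set st := blockStart S k with hstdef
    have hmemx : ∀ b : Fin S[k], (S.take k).sum ≤ st + (b : ℕ) ∧
        st + (b : ℕ) < (S.take (k+1)).sum := by
      intro b
      constructor
      · simp [hstdef, blockStart]
      · rw [hend]; omega
    have hσmem : ∀ b : Fin S[k],
        st ≤ ((σ ⟨st + b, blockIdx_lt hsum hk b.isLt⟩ : Fin n) : ℕ) ∧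
        ((σ ⟨st + b, blockIdx_lt hsum hk b.isLt⟩ : Fin n) : ℕ) < st + S[k] := by
      intro b
      obtain ⟨k', h1, h2, h3, h4⟩ := hσ ⟨st + b, blockIdx_lt hsum hk b.isLt⟩
      obtain ⟨h5, h6⟩ := hmemx b
      have hkk : k' = k := block_disjoint h3 h4 h5 h6
      subst hkk
      rw [hend] at h2
      exact ⟨le_trans (le_of_eq rfl) h1, h2⟩
    set f : Fin S[k] → Fin S[k] := fun b =>
      ⟨((σ ⟨st + b, blockIdx_lt hsum hk b.isLt⟩ : Fin n) : ℕ) - st, by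
        obtain ⟨h1, h2⟩ := hσmem b; omega⟩ with hfdef
    have hfinj : Function.Injective f := by
      intro b₁ b₂ hf
      have h1 := hσmem b₁
      have h2 := hσmem b₂
      have hv : (f b₁ : ℕ) = (f b₂ : ℕ) := by rw [hf]
      simp only [hfdef] at hv
      have : ((σ ⟨st + b₁, blockIdx_lt hsum hk b₁.isLt⟩ : Fin n) : ℕ)
          = ((σ ⟨st + b₂, blockIdx_lt hsum hk b₂.isLt⟩ : Fin n) : ℕ) := by omega
      have heq := σ.injective (Fin.ext this)
      have : st + (b₁ : ℕ) = st + (b₂ : ℕ) := congrArg Fin.val heq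
      exact Fin.ext (by omega)
    refine ⟨Equiv.ofBijective f (Finite.injective_iff_bijective.mp hfinj), ?_⟩
    intro a b
    have hiff : (⟨st + a, blockIdx_lt hsum hk a.isLt⟩ : Fin n)
        = σ ⟨st + b, blockIdx_lt hsum hk b.isLt⟩ ↔ a = f b := by
      obtain ⟨h1, h2⟩ := hσmem b
      have hfb : ((f b) : ℕ)
          = ((σ ⟨st + b, blockIdx_lt hsum hk b.isLt⟩ : Fin n) : ℕ) - st := rfl
      constructor
      · intro h
        apply Fin.ext
        have hval : st + (a : ℕ)
            = ((σ ⟨st + b, blockIdx_lt hsum hk b.isLt⟩ : Fin n) : ℕ) := congrArg Fin.val h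
        rw [hfb]
        omega
      · intro h
        apply Fin.ext
        have hval : (a : ℕ)
            = ((σ ⟨st + b, blockIdx_lt hsum hk b.isLt⟩ : Fin n) : ℕ) - st := by
          rw [h, hfb]
        show st + (a : ℕ) = ((σ ⟨st + b, blockIdx_lt hsum hk b.isLt⟩ : Fin n) : ℕ)
        omega
    show (if (⟨st + a, blockIdx_lt hsum hk a.isLt⟩ : Fin n)
        = σ ⟨st + b, blockIdx_lt hsum hk b.isLt⟩ then (1 : ZMod 2) else 0)
        = if a = Equiv.ofBijective f (Finite.injective_iff_bijective.mp hfinj) b then 1 else 0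
    have hob : Equiv.ofBijective f (Finite.injective_iff_bijective.mp hfinj) b = f b := rfl
    rw [hob]
    by_cases h : a = f b
    · rw [if_pos (hiff.mpr h), if_pos h]
    · rw [if_neg (fun hh => h (hiff.mp hh)), if_neg h]
  · -- U blocks
    intro k hk
    constructor
    · apply UniUpper_isUnit
      constructor
      · intro a
        show U _ _ = 1
        exact hUdiag _
      · intro a b hba
        show U _ _ = 0
        exact hUlow _ _ (by simp only []; omega)
    · intro a b hba
      show U _ _ = 0
      exact hUlow _ _ (by simp only []; omega)
  · intro r c hrc _
    exact hrows r c r.isLt hrc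
  · exact hNu.mul ((Pmat_isUnit σ).mul (UniUpper_isUnit ⟨hUdiag, hUlow⟩))
end
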